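/- arXiv:1509.00340 — 4 statements merged into one kernel-verified Lean document; each statement's English description precedes it below -/
import Mathlib

section
/- For every natural number n, the integral over the real line of q·ψ_{2n+1}(q), where ψ_{2n+1}(q) = (2^{2n+1}(2n+1)!√π)^{-1/2} H_{2n+1}(q) e^{-q²/2}, equals 2 · π^{1/4} · √((2n+1)!) / (2^n n!). -/
open MeasureTheory Real

/-- Physicists' Hermite polynomials. -/
noncomputable def H : ℕ → ℝ → ℝ
  | 0 => fun _ => 1
  | 1 => fun q => 2 * q
  | (n + 2) => fun q => 2 * q * H (n + 1) q - 2 * (n + 1) * H n q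

/-- Normalized Hermite functions. -/
noncomputable def ψ (n : ℕ) (q : ℝ) : ℝ :=
  (Real.sqrt (2 ^ n * n.factorial * Real.sqrt Real.pi))⁻¹ * H n q * Real.exp (-q ^ 2 / 2)

/-!
Differentiating the recurrence gives `H (n + 1)' = 2 (n + 1) H n`, so Gaussian integration by
parts turns `∫ q H_{n+1}(q) e^{-q²/2}` into `2 (n + 1) ∫ H_n(q) e^{-q²/2}`. Feeding this back into
the three-term recurrence gives `∫ H_{n+2} e^{-q²/2} = 2 (n + 1) ∫ H_n e^{-q²/2}`, hence
`∫ H_{2n} e^{-q²/2} = √(2π) (2n)! / n!`; what remains is bookkeeping of the normalising constant.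
-/

open Polynomial

lemma H_add_two (n : ℕ) :
    H (n + 2) = fun q => 2 * q * H (n + 1) q - 2 * (n + 1) * H n q := by
  rw [H]

lemma exists_eval_eq_H : ∀ n : ℕ, ∃ p : ℝ[X], ∀ q, H n q = p.eval q
  | 0 => ⟨1, fun q => by simp [H]⟩
  | 1 => ⟨C (2 : ℝ) * X, fun q => by simp [H]⟩
  | n + 2 => by
      obtain ⟨p₁, hp₁⟩ := exists_eval_eq_H (n + 1)
      obtain ⟨p₀, hp₀⟩ := exists_eval_eq_H n
      exact ⟨C 2 * X * p₁ - C (2 * ((n : ℝ) + 1)) * p₀, fun q => by simp [H_add_two, hp₁, hp₀]⟩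

lemma hasDerivAt_H_add_two {n : ℕ} {q d₁ d₀ : ℝ} (h₁ : HasDerivAt (H (n + 1)) d₁ q)
    (h₀ : HasDerivAt (H n) d₀ q) :
    HasDerivAt (H (n + 2)) (2 * H (n + 1) q + 2 * q * d₁ - 2 * (n + 1) * d₀) q := by
  rw [H_add_two]
  refine ((((hasDerivAt_id' q).const_mul 2).mul h₁).sub
    (h₀.const_mul (2 * ((n : ℝ) + 1)))).congr_deriv ?_
  ring

lemma hasDerivAt_H_succ : ∀ (n : ℕ) (q : ℝ), HasDerivAt (H (n + 1)) (2 * (n + 1) * H n q) q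
  | 0, q => by simpa [H] using (hasDerivAt_id q).const_mul (2 : ℝ)
  | 1, q => by
      convert hasDerivAt_H_add_two (hasDerivAt_H_succ 0 q) (hasDerivAt_const q 1) using 1
      simp only [H]; push_cast; ring
  | n + 2, q => by
      convert hasDerivAt_H_add_two (hasDerivAt_H_succ (n + 1) q) (hasDerivAt_H_succ n q) using 1
      rw [H_add_two]; push_cast; ring

lemma integrable_eval_mul_exp_neg_mul_sq {b : ℝ} (hb : 0 < b) (p : ℝ[X]) :
    Integrable fun x => p.eval x * exp (-b * x ^ 2) := by
  simp_rw [eval_eq_sum_range, Finset.sum_mul]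
  refine integrable_finsetSum _ fun i _ => ?_
  have hi : (-1 : ℝ) < i := by linarith [i.cast_nonneg (α := ℝ)]
  simpa [mul_assoc] using (integrable_rpow_mul_exp_neg_mul_sq hb hi).const_mul (p.coeff i)

lemma hasDerivAt_exp_neg_mul_sq (b x : ℝ) :
    HasDerivAt (fun x => exp (-b * x ^ 2)) (-2 * b * x * exp (-b * x ^ 2)) x := by
  convert (((hasDerivAt_pow 2 x).const_mul (-b)).exp) using 1
  push_cast; ring

lemma integral_mul_mul_exp_neg_mul_sq {f f' : ℝ → ℝ} {b : ℝ} (hf : ∀ x, HasDerivAt f (f' x) x)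
    (hfg : Integrable fun x => f x * exp (-b * x ^ 2))
    (hf'g : Integrable fun x => f' x * exp (-b * x ^ 2))
    (hxfg : Integrable fun x => x * f x * exp (-b * x ^ 2)) :
    2 * b * ∫ x, x * f x * exp (-b * x ^ 2) = ∫ x, f' x * exp (-b * x ^ 2) := by
  have hderiv : ∀ x, HasDerivAt (fun x => f x * exp (-b * x ^ 2))
      (f' x * exp (-b * x ^ 2) - 2 * b * (x * f x * exp (-b * x ^ 2))) x := fun x => by
    refine ((hf x).mul (hasDerivAt_exp_neg_mul_sq b x)).congr_deriv ?_
    ring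
  have hzero :=
    integral_eq_zero_of_hasDerivAt_of_integrable hderiv (hf'g.sub (hxfg.const_mul _)) hfg
  rw [integral_sub hf'g (hxfg.const_mul _), integral_const_mul, sub_eq_zero] at hzero
  exact hzero.symm

lemma neg_sq_div_two (q : ℝ) : -q ^ 2 / 2 = -(1 / 2) * q ^ 2 := by ring

lemma integrable_H_mul_exp (n : ℕ) : Integrable fun q => H n q * exp (-q ^ 2 / 2) := by
  obtain ⟨p, hp⟩ := exists_eval_eq_H n
  simpa only [hp, neg_sq_div_two] using integrable_eval_mul_exp_neg_mul_sq one_half_pos p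

lemma integrable_mul_H_mul_exp (n : ℕ) : Integrable fun q => q * H n q * exp (-q ^ 2 / 2) := by
  obtain ⟨p, hp⟩ := exists_eval_eq_H n
  have := integrable_eval_mul_exp_neg_mul_sq one_half_pos (X * p)
  simp only [eval_mul, eval_X] at this
  simpa only [hp, neg_sq_div_two] using this

lemma integral_mul_H_succ_mul_exp (n : ℕ) :
    ∫ q, q * H (n + 1) q * exp (-q ^ 2 / 2) = 2 * (n + 1) * ∫ q, H n q * exp (-q ^ 2 / 2) := by
  have h := integral_mul_mul_exp_neg_mul_sq (b := 1 / 2) (hasDerivAt_H_succ n)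
  simp only [← neg_sq_div_two] at h
  rw [← integral_const_mul]
  simp only [← mul_assoc]
  rw [← h (integrable_H_mul_exp _) ?_ (integrable_mul_H_mul_exp _)]
  · ring
  · simpa only [← mul_assoc] using (integrable_H_mul_exp n).const_mul (2 * ((n : ℝ) + 1))

lemma integral_H_zero_mul_exp : ∫ q, H 0 q * exp (-q ^ 2 / 2) = √(2 * π) := by
  simp only [H, one_mul, neg_sq_div_two, integral_gaussian]
  norm_num [div_div_eq_mul_div, mul_comm]

lemma integral_H_add_two_mul_exp (n : ℕ) :
    ∫ q, H (n + 2) q * exp (-q ^ 2 / 2) = 2 * (n + 1) * ∫ q, H n q * exp (-q ^ 2 / 2) := by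
  have hsplit : ∀ q, H (n + 2) q * exp (-q ^ 2 / 2) =
      2 * (q * H (n + 1) q * exp (-q ^ 2 / 2)) - 2 * (n + 1) * (H n q * exp (-q ^ 2 / 2)) :=
    fun q => by rw [H_add_two]; ring
  simp only [hsplit]
  rw [integral_sub ((integrable_mul_H_mul_exp _).const_mul _)
      ((integrable_H_mul_exp n).const_mul _), integral_const_mul, integral_const_mul,
    integral_mul_H_succ_mul_exp]
  ring

lemma integral_H_two_mul_mul_exp (n : ℕ) :
    ∫ q, H (2 * n) q * exp (-q ^ 2 / 2) = √(2 * π) * (2 * n).factorial / n.factorial := by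
  induction n with
  | zero => simpa using integral_H_zero_mul_exp
  | succ n ih =>
    rw [mul_add_one, integral_H_add_two_mul_exp, ih, Nat.factorial_succ, Nat.factorial_succ,
      Nat.factorial_succ]
    field_simp
    push_cast
    ring

lemma rpow_quarter_mul_self {x : ℝ} (hx : 0 ≤ x) : x ^ (1 / 4 : ℝ) * x ^ (1 / 4 : ℝ) = √x := by
  rw [← rpow_add' hx (by norm_num), sqrt_eq_rpow]; norm_num

lemma sqrt_two_pow_odd_mul_sqrt_pi (n : ℕ) {a : ℝ} (ha : 0 ≤ a) :
    √(2 ^ (2 * n + 1) * a * √π) = 2 ^ n * √2 * √a * π ^ (1 / 4 : ℝ) := by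
  rw [sqrt_eq_iff_mul_self_eq (by positivity) (by positivity), ← rpow_quarter_mul_self pi_pos.le]
  linear_combination (-(2 ^ n * 2 ^ n) * √a * √a * π ^ (1 / 4 : ℝ) * π ^ (1 / 4 : ℝ)) *
      mul_self_sqrt zero_le_two +
    (-(2 ^ n * 2 ^ n) * 2 * π ^ (1 / 4 : ℝ) * π ^ (1 / 4 : ℝ)) * mul_self_sqrt ha

theorem integral_q_psi_odd (n : ℕ) :
    ∫ q : ℝ, q * ψ (2 * n + 1) q =
      2 * Real.pi ^ ((1 : ℝ) / 4) * Real.sqrt ((2 * n + 1).factorial) /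
        (2 ^ n * n.factorial) := by
  have hψ : ∀ q, q * ψ (2 * n + 1) q = (√(2 ^ (2 * n + 1) * (2 * n + 1).factorial * √π))⁻¹ *
      (q * H (2 * n + 1) q * exp (-q ^ 2 / 2)) := fun q => by rw [ψ]; ring
  simp only [hψ, integral_const_mul, integral_mul_H_succ_mul_exp, integral_H_two_mul_mul_exp]
  rw [sqrt_two_pow_odd_mul_sqrt_pi n (Nat.cast_nonneg _)]
  have hfact : ((2 * n + 1).factorial : ℝ) = (2 * n + 1) * (2 * n).factorial := by
    push_cast [Nat.factorial_succ]; ring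
  rw [sqrt_mul zero_le_two, ← rpow_quarter_mul_self pi_pos.le]
  have hs := mul_self_sqrt (Nat.cast_nonneg (α := ℝ) (2 * n + 1).factorial)
  field_simp
  push_cast
  linear_combination -hfact - hs
end

section
/- Define f_{j,k} by f_{0,k} = 1 and f_{j,k} = ((2k+1)/2) f_{j-1,k+1} + (2k + 1/2) f_{j-1,k} + k f_{j-1,k-1}. Then for each j, the function k ↦ f_{j,k} is a polynomial in k of degree exactly j with positive leading coefficient 4^j. -/
/-- The two-index recurrence f_{j,k}. -/
def f : ℕ → ℤ → ℚ
  | 0, _ => 1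
  | (j + 1), k =>
      ((2 * k + 1) / 2) * f j (k + 1) + (2 * (k : ℚ) + 1 / 2) * f j k + (k : ℚ) * f j (k - 1)

open Polynomial

theorem f_is_polynomial (j : ℕ) :
    ∃ P : Polynomial ℚ, P.natDegree = j ∧ P.leadingCoeff = 4 ^ j ∧
      ∀ k : ℤ, f j k = P.eval (k : ℚ) := by
  induction j with
  | zero => exact ⟨1, by simp, by simp, fun k => by simp [f]⟩
  | succ j ih =>
    obtain ⟨P, hdeg, hlc, heval⟩ := ih
    have h4 : (4:ℚ) ^ j ≠ 0 := pow_ne_zero j (by norm_num)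
    have hP0 : P ≠ 0 := by
      intro h
      rw [h, leadingCoeff_zero] at hlc
      exact h4 hlc.symm
    set A : ℚ[X] := (X + C (1/2)) * (P.comp (X + C 1)) with hA
    set B : ℚ[X] := (C 2 * X + C (1/2)) * P with hB
    set D : ℚ[X] := X * P.comp (X + C (-1)) with hD
    have hcomp1 : (P.comp (X + C 1)).natDegree = j := by
      rw [natDegree_comp, hdeg, natDegree_X_add_C, mul_one]
    have hcomp1lc : (P.comp (X + C 1)).leadingCoeff = 4 ^ j := by
      rw [leadingCoeff_comp (by rw [natDegree_X_add_C]; norm_num), hlc,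
        leadingCoeff_X_add_C, one_pow, mul_one]
    have hcomp2 : (P.comp (X + C (-1))).natDegree = j := by
      rw [natDegree_comp, hdeg, natDegree_X_add_C, mul_one]
    have hcomp2lc : (P.comp (X + C (-1))).leadingCoeff = 4 ^ j := by
      rw [leadingCoeff_comp (by rw [natDegree_X_add_C]; norm_num), hlc,
        leadingCoeff_X_add_C, one_pow, mul_one]
    have hcomp10 : P.comp (X + C 1) ≠ 0 := fun h => by
      rw [h, leadingCoeff_zero] at hcomp1lc; exact h4 hcomp1lc.symm
    have hcomp20 : P.comp (X + C (-1)) ≠ 0 := fun h => by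
      rw [h, leadingCoeff_zero] at hcomp2lc; exact h4 hcomp2lc.symm
    have hlin10 : (X + C (1/2) : ℚ[X]) ≠ 0 := X_add_C_ne_zero _
    have hlin2deg : (C 2 * X + C (1/2) : ℚ[X]).natDegree = 1 :=
      natDegree_linear (by norm_num)
    have hlin2lc : (C 2 * X + C (1/2) : ℚ[X]).leadingCoeff = 2 :=
      leadingCoeff_linear (by norm_num)
    have hlin20 : (C 2 * X + C (1/2) : ℚ[X]) ≠ 0 := fun h => by
      rw [h, leadingCoeff_zero] at hlin2lc; exact two_ne_zero hlin2lc.symm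
    have hAdeg : A.natDegree = j + 1 := by
      rw [hA, natDegree_mul hlin10 hcomp10, natDegree_X_add_C, hcomp1, add_comm]
    have hAlc : A.leadingCoeff = 4 ^ j := by
      rw [hA, leadingCoeff_mul, leadingCoeff_X_add_C, hcomp1lc, one_mul]
    have hBdeg : B.natDegree = j + 1 := by
      rw [hB, natDegree_mul hlin20 hP0, hlin2deg, hdeg, add_comm]
    have hBlc : B.leadingCoeff = 2 * 4 ^ j := by
      rw [hB, leadingCoeff_mul, hlin2lc, hlc]
    have hDdeg : D.natDegree = j + 1 := by
      rw [hD, natDegree_mul X_ne_zero hcomp20, natDegree_X, hcomp2, add_comm]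
    have hDlc : D.leadingCoeff = 4 ^ j := by
      rw [hD, leadingCoeff_mul, leadingCoeff_X, hcomp2lc, one_mul]
    have hcoeff : (A + B + D).coeff (j + 1) = 4 ^ (j + 1) := by
      have h1 : A.coeff (j+1) = 4 ^ j := by rw [← hAdeg]; exact hAlc
      have h2 : B.coeff (j+1) = 2 * 4 ^ j := by rw [← hBdeg]; exact hBlc
      have h3 : D.coeff (j+1) = 4 ^ j := by rw [← hDdeg]; exact hDlc
      simp only [coeff_add, h1, h2, h3]; ring
    have hne : (A + B + D).coeff (j + 1) ≠ 0 := by rw [hcoeff]; positivity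
    have hle : (A + B + D).natDegree ≤ j + 1 := by
      refine le_trans (natDegree_add_le _ _) (max_le ?_ (le_of_eq hDdeg))
      exact le_trans (natDegree_add_le A B)
        (max_le (le_of_eq hAdeg) (le_of_eq hBdeg))
    have hndeg : (A + B + D).natDegree = j + 1 :=
      le_antisymm hle (le_natDegree_of_ne_zero hne)
    refine ⟨A + B + D, hndeg, ?_, ?_⟩
    · rw [leadingCoeff, hndeg, hcoeff]
    · intro k
      have e1 := heval (k + 1)
      have e2 := heval k
      have e3 := heval (k - 1)
      push_cast at e1 e2 e3
      simp only [f, e1, e2, e3, hA, hB, hD, eval_add, eval_mul, eval_X, eval_C, eval_comp]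
      push_cast
      ring
end

section
/- Let (ψ_k) denote the Hermite orthonormal basis of L²(ℝ) and define A_k = √((2k)!)/(2^k k!) and B_k = √((2k+1)!)/(2^k k!). Fix n ∈ ℕ and define, for m ≠ n, the vectors ψ^{(1)}_{m,n} = A_n ψ_{2m} − A_m ψ_{2n} and ψ^{(2)}_{m,n} = B_n ψ_{2m+1} − B_m ψ_{2n+1}. If φ ∈ L²(ℝ) is orthogonal to ψ^{(1)}_{m,n} and ψ^{(2)}_{m,n} for all m ≠ n, then φ = 0. -/
open MeasureTheory Real

noncomputable def A (k : ℕ) : ℝ := Real.sqrt ((2 * k).factorial) / (2 ^ k * k.factorial)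

noncomputable def B (k : ℕ) : ℝ := Real.sqrt ((2 * k + 1).factorial) / (2 ^ k * k.factorial)

/-! The relations say that the coefficients `⟪φ, ψ_{2m}⟫` are proportional to `A m`, and
`⟪φ, ψ_{2m+1}⟫` to `B m`. Since `A m ^ 2 ≥ 1 / (2m + 1)` and `B m ^ 2 ≥ A m ^ 2`, neither
sequence is square-summable, while the coefficients of `φ` in a Hilbert basis are; so the
proportionality constants vanish, all coefficients of `φ` vanish, and `φ = 0`. -/

theorem eq_zero_of_mul_eq_mul_of_not_summable_sq {ι : Type*} {w c : ι → ℝ} {i : ι}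
    (hwi : w i ≠ 0) (hw : ¬ Summable fun j => w j ^ 2) (hc : Summable fun j => c j ^ 2)
    (h : ∀ j, j ≠ i → w i * c j = w j * c i) (j : ι) : c j = 0 := by
  set K := c i / w i
  have hprop : ∀ j, c j = K * w j := by
    intro j
    rcases eq_or_ne j i with rfl | hj
    · exact (div_mul_cancel₀ _ hwi).symm
    · rw [div_mul_eq_mul_div, eq_div_iff hwi]
      linear_combination h j hj
  have hK : K = 0 := by
    by_contra hK
    refine hw ((summable_mul_left_iff (pow_ne_zero 2 hK)).mp ?_)
    exact hc.congr fun j => by rw [hprop j, mul_pow]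
  rw [hprop j, hK, zero_mul]

theorem not_summable_one_div_two_mul_add_one :
    ¬ Summable fun k : ℕ => (1 : ℝ) / (2 * k + 1) := by
  intro h
  have hhalf : Summable fun k : ℕ => (1 : ℝ) / 2 * (1 / (k + 1 : ℕ)) :=
    h.of_nonneg_of_le (fun k => by positivity) fun k => by
      rw [Nat.cast_succ, one_div_mul_one_div]
      gcongr
      linarith
  exact not_summable_one_div_natCast
    ((summable_nat_add_iff 1).mp ((summable_mul_left_iff (by norm_num)).mp hhalf))

theorem A_sq (k : ℕ) : A k ^ 2 = (2 * k).choose k / 4 ^ k := by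
  have hfact : ((2 * k).factorial : ℝ) = (2 * k).choose k * k.factorial ^ 2 := by
    have h := Nat.choose_mul_factorial_mul_factorial (show k ≤ 2 * k by omega)
    rw [show 2 * k - k = k by omega] at h
    exact_mod_cast (by rw [← h]; ring : (2 * k).factorial = (2 * k).choose k * k.factorial ^ 2)
  rw [A, div_pow, Real.sq_sqrt (by positivity), hfact, mul_pow, ← pow_mul, mul_comm k 2, pow_mul]
  field_simp
  norm_num

theorem B_sq (k : ℕ) : B k ^ 2 = (2 * k + 1) * A k ^ 2 := by
  rw [A, B, div_pow, div_pow, Real.sq_sqrt (by positivity), Real.sq_sqrt (by positivity),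
    Nat.factorial_succ, Nat.cast_mul]
  push_cast
  ring

theorem A_ne_zero (k : ℕ) : A k ≠ 0 :=
  (div_pos (Real.sqrt_pos.mpr (by positivity)) (by positivity)).ne'

theorem B_ne_zero (k : ℕ) : B k ≠ 0 :=
  (div_pos (Real.sqrt_pos.mpr (by positivity)) (by positivity)).ne'

theorem one_div_two_mul_add_one_le_A_sq (k : ℕ) : 1 / (2 * k + 1 : ℝ) ≤ A k ^ 2 := by
  rw [A_sq, div_le_div_iff₀ (by positivity) (by positivity), one_mul]
  exact_mod_cast (Nat.four_pow_le_two_mul_add_one_mul_central_binom k).trans_eq (mul_comm _ _)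

theorem A_sq_le_B_sq (k : ℕ) : A k ^ 2 ≤ B k ^ 2 := by
  rw [B_sq]
  exact le_mul_of_one_le_left (sq_nonneg _) (by linarith [(k.cast_nonneg : (0 : ℝ) ≤ k)])

theorem not_summable_A_sq : ¬ Summable fun k => A k ^ 2 := fun h =>
  not_summable_one_div_two_mul_add_one
    (h.of_nonneg_of_le (fun k => by positivity) one_div_two_mul_add_one_le_A_sq)

theorem not_summable_B_sq : ¬ Summable fun k => B k ^ 2 := fun h =>
  not_summable_A_sq (h.of_nonneg_of_le (fun k => sq_nonneg (A k)) A_sq_le_B_sq)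

theorem HilbertBasis.summable_inner_sq {ι E : Type*} [NormedAddCommGroup E]
    [InnerProductSpace ℝ E] (b : HilbertBasis ι ℝ E) (x : E) :
    Summable fun i => inner ℝ x (b i) ^ 2 := by
  simpa only [Real.norm_eq_abs, sq_abs, real_inner_comm] using
    b.orthonormal.inner_products_summable (x := x)

theorem HilbertBasis.eq_zero_of_forall_inner_eq_zero {ι E : Type*} [NormedAddCommGroup E]
    [InnerProductSpace ℝ E] (b : HilbertBasis ι ℝ E) {x : E} (h : ∀ i, inner ℝ x (b i) = 0) :
    x = 0 := by
  rw [← inner_self_eq_zero (𝕜 := ℝ), ← b.tsum_inner_mul_inner]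
  simp [h]

theorem orthogonal_to_basic_vectors_eq_zero_general
    (hb : HilbertBasis ℕ ℝ (Lp ℝ 2 (volume : Measure ℝ)))
    (n : ℕ) (φ : Lp ℝ 2 (volume : Measure ℝ))
    (h1 : ∀ m, m ≠ n → inner (𝕜 := ℝ) φ (A n • hb (2 * m) - A m • hb (2 * n)) = 0)
    (h2 : ∀ m, m ≠ n →
      inner (𝕜 := ℝ) φ (B n • hb (2 * m + 1) - B m • hb (2 * n + 1)) = 0) :
    φ = 0 := by
  set c : ℕ → ℝ := fun k => inner ℝ φ (hb k)
  have hc : Summable fun k => c k ^ 2 := hb.summable_inner_sq φ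
  have heven (m : ℕ) : c (2 * m) = 0 :=
    eq_zero_of_mul_eq_mul_of_not_summable_sq (c := fun m => c (2 * m)) (A_ne_zero n) not_summable_A_sq
      (hc.comp_injective fun a b hab => by omega)
      (fun m hm => by
        simpa [c, inner_sub_right, real_inner_smul_right, sub_eq_zero] using h1 m hm) m
  have hodd (m : ℕ) : c (2 * m + 1) = 0 :=
    eq_zero_of_mul_eq_mul_of_not_summable_sq (c := fun m => c (2 * m + 1)) (B_ne_zero n) not_summable_B_sq
      (hc.comp_injective fun a b hab => by omega)
      (fun m hm => by
        simpa [c, inner_sub_right, real_inner_smul_right, sub_eq_zero] using h2 m hm) m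
  refine hb.eq_zero_of_forall_inner_eq_zero fun k => ?_
  obtain ⟨m, rfl | rfl⟩ := Nat.even_or_odd' k
  · exact heven m
  · exact hodd m

theorem orthogonal_to_basic_vectors_eq_zero
    (hb : HilbertBasis ℕ ℝ (Lp ℝ 2 (volume : Measure ℝ)))
    (hψ : ∀ k, (hb k : ℝ → ℝ) =ᵐ[volume] ψ k)
    (n : ℕ) (φ : Lp ℝ 2 (volume : Measure ℝ))
    (h1 : ∀ m, m ≠ n → inner (𝕜 := ℝ) φ (A n • hb (2 * m) - A m • hb (2 * n)) = 0)
    (h2 : ∀ m, m ≠ n →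
      inner (𝕜 := ℝ) φ (B n • hb (2 * m + 1) - B m • hb (2 * n + 1)) = 0) :
    φ = 0 :=
  orthogonal_to_basic_vectors_eq_zero_general hb n φ h1 h2
end

section
/- Let φ(q) = (1 − 2q²) e^{−q²}. Then the function q ↦ ∫_ℝ (q+q') sgn(q−q') (1−2q'²) e^{−q'²} dq' is square integrable on ℝ. -/
open MeasureTheory Filter Real Set

private lemma int_pow_gauss (n : ℕ) {b : ℝ} (hb : 0 < b) :
    Integrable (fun x : ℝ => x ^ n * Real.exp (-(b * x ^ 2))) := by
  have h := integrable_rpow_mul_exp_neg_mul_sq hb (s := (n : ℝ))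
    (by exact_mod_cast (by linarith [Nat.cast_nonneg (α := ℝ) n] : (-1 : ℝ) < n))
  simpa [Real.rpow_natCast, neg_mul] using h

private lemma tendsto_pow_gauss (n : ℕ) :
    Tendsto (fun x : ℝ => x ^ n * Real.exp (-x ^ 2)) (cocompact ℝ) (nhds 0) := by
  have h := tendsto_rpow_abs_mul_exp_neg_mul_sq_cocompact (a := 1) one_pos (n : ℝ)
  refine squeeze_zero_norm (fun x => ?_) h
  rw [Real.norm_eq_abs, abs_mul, abs_pow, abs_of_pos (Real.exp_pos _),
    ← Real.rpow_natCast |x| n]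
  simp [neg_mul]

theorem T11_of_gaussian_memL2 :
    MemLp (fun q : ℝ => ∫ q' : ℝ,
      (q + q') * Real.sign (q - q') * ((1 - 2 * q' ^ 2) * Real.exp (-q' ^ 2))) 2
      (volume : Measure ℝ) := by
  have hpow : ∀ n : ℕ, Integrable (fun x : ℝ => x ^ n * Real.exp (-x ^ 2)) := by
    intro n
    simpa using int_pow_gauss n (b := 1) one_pos
  -- Step 1: compute the integral explicitly
  have key : (fun q : ℝ => ∫ q' : ℝ,
      (q + q') * Real.sign (q - q') * ((1 - 2 * q' ^ 2) * Real.exp (-q' ^ 2)))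
      = fun q : ℝ => (1 + 4 * q ^ 2) * Real.exp (-q ^ 2) := by
    funext q
    set A : ℝ → ℝ := fun x => (q + x) * ((1 - 2 * x ^ 2) * Real.exp (-x ^ 2)) with hAdef
    set F : ℝ → ℝ := fun x => q * (x * Real.exp (-x ^ 2))
      + (1 / 2 + x ^ 2) * Real.exp (-x ^ 2) with hFdef
    have hA : Integrable A := by
      have h := (((hpow 0).const_mul q).add (hpow 1)).sub
        (((hpow 2).const_mul (2 * q)).add ((hpow 3).const_mul 2))
      refine h.congr (Filter.Eventually.of_forall fun x => ?_)
      simp only [Pi.add_apply, Pi.sub_apply, hAdef]; ring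
    have hFderiv : ∀ x : ℝ, HasDerivAt F (A x) x := by
      intro x
      have he : HasDerivAt (fun x : ℝ => Real.exp (-x ^ 2))
          (Real.exp (-x ^ 2) * (-(2 * x))) x := by
        have h1 : HasDerivAt (fun x : ℝ => -x ^ 2) (-(2 * x)) x := by
          simpa using ((hasDerivAt_pow 2 x).fun_neg)
        exact h1.exp
      have h1 : HasDerivAt (fun x : ℝ => x * Real.exp (-x ^ 2))
          (1 * Real.exp (-x ^ 2) + x * (Real.exp (-x ^ 2) * (-(2 * x)))) x :=
        (hasDerivAt_id x).mul he
      have h2 : HasDerivAt (fun x : ℝ => (1 / 2 + x ^ 2) * Real.exp (-x ^ 2))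
          ((0 + 2 * x) * Real.exp (-x ^ 2)
            + (1 / 2 + x ^ 2) * (Real.exp (-x ^ 2) * (-(2 * x)))) x := by
        have hp : HasDerivAt (fun x : ℝ => 1 / 2 + x ^ 2) (0 + 2 * x) x := by
          simpa using (hasDerivAt_const x (1 / 2 : ℝ)).fun_add (hasDerivAt_pow 2 x)
        exact hp.mul he
      have := (h1.const_mul q).fun_add h2
      refine this.congr_deriv ?_
      simp only [hAdef]; ring
    have htend : Tendsto F (cocompact ℝ) (nhds 0) := by
      have h := (((tendsto_pow_gauss 1).const_mul q).add
        (((tendsto_pow_gauss 0).const_mul (1 / 2)).add (tendsto_pow_gauss 2)))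
      simp only [mul_zero, add_zero, zero_add] at h
      refine h.congr (fun x => ?_)
      simp only [hFdef]; ring
    rw [cocompact_eq_atBot_atTop, tendsto_sup] at htend
    have hne : ∀ᵐ x : ℝ, x ≠ q := by
      rw [ae_iff]
      simpa using measure_singleton (α := ℝ) q
    have hcongIic : (fun x => (q + x) * Real.sign (q - x)
        * ((1 - 2 * x ^ 2) * Real.exp (-x ^ 2)))
        =ᵐ[volume.restrict (Iic q)] A := by
      filter_upwards [ae_restrict_mem measurableSet_Iic, ae_restrict_of_ae hne]
        with x hx hxne
      have hlt : 0 < q - x := sub_pos.2 (lt_of_le_of_ne hx hxne)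
      rw [Real.sign_of_pos hlt]
      simp only [hAdef]; ring
    have hcongIoi : (fun x => (q + x) * Real.sign (q - x)
        * ((1 - 2 * x ^ 2) * Real.exp (-x ^ 2)))
        =ᵐ[volume.restrict (Ioi q)] fun x => -A x := by
      filter_upwards [ae_restrict_mem measurableSet_Ioi] with x hx
      have hlt : q - x < 0 := sub_neg.2 hx
      rw [Real.sign_of_neg hlt]
      simp only [hAdef]; ring
    have hIic : ∫ x in Iic q, (q + x) * Real.sign (q - x)
        * ((1 - 2 * x ^ 2) * Real.exp (-x ^ 2)) = F q := by
      rw [integral_congr_ae hcongIic,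
        integral_Iic_of_hasDerivAt_of_tendsto' (fun x _ => hFderiv x)
          hA.integrableOn htend.1, sub_zero]
    have hIoi : ∫ x in Ioi q, (q + x) * Real.sign (q - x)
        * ((1 - 2 * x ^ 2) * Real.exp (-x ^ 2)) = F q := by
      rw [integral_congr_ae hcongIoi, integral_neg,
        integral_Ioi_of_hasDerivAt_of_tendsto' (fun x _ => hFderiv x)
          hA.integrableOn htend.2]
      ring
    have hIntg : Integrable (fun x => (q + x) * Real.sign (q - x)
        * ((1 - 2 * x ^ 2) * Real.exp (-x ^ 2))) := by
      rw [← integrableOn_univ, ← Iic_union_Ioi (a := q), integrableOn_union]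
      exact ⟨(Integrable.congr hA.integrableOn hcongIic.symm),
        (Integrable.congr hA.neg.integrableOn (by exact hcongIoi.symm))⟩
    rw [← intervalIntegral.integral_Iic_add_Ioi hIntg.integrableOn hIntg.integrableOn,
      hIic, hIoi, hFdef]
    ring
  rw [key]
  -- Step 2: the explicit function is in L²
  have hcont : Continuous fun q : ℝ => (1 + 4 * q ^ 2) * Real.exp (-q ^ 2) := by
    fun_prop
  refine (memLp_two_iff_integrable_sq hcont.aestronglyMeasurable).2 ?_
  have h := ((int_pow_gauss 0 two_pos).add ((int_pow_gauss 2 two_pos).const_mul 8)).add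
    ((int_pow_gauss 4 two_pos).const_mul 16)
  refine h.congr (Filter.Eventually.of_forall fun x => ?_)
  have : Real.exp (-(2 * x ^ 2)) = Real.exp (-x ^ 2) * Real.exp (-x ^ 2) := by
    rw [← Real.exp_add]; ring_nf
  simp only [Pi.add_apply, pow_zero, one_mul, this]
  ring
end
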